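/- arXiv:1606.08988 — 2 statements merged into one kernel-verified Lean document; each statement's English description precedes it below -/
import Mathlib

section
/- For the iterates of the adaptive accelerated gradient method described in the context, for every T ≥ 1 and every u ∈ Q: A_T·φ(y_T) ≤ ∑_{k=1}^{T} α_k·( f(x_k) + ⟨∇f(x_k), u − x_k⟩ + Ψ(u) ) + V_{z_0}(u), where A_T = α_T² L_T. In particular A_T·φ(y_T) ≤ min over u ∈ Q of the right-hand side. -/
/-!
Each iteration couples a gradient step (`y`) and a mirror step (`z`) at
`x_{k+1} = τ_k z_k + (1 - τ_k) y_k`. Testing the minimality of `y_{k+1}` at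
`τ_k z_{k+1} + (1 - τ_k) y_k` and using the descent condition bounds `A_{k+1} φ(y_{k+1})`;
the optimality condition of the mirror step (through the three-point identity of the Bregman
divergence) and convexity of `f` at `x_{k+1}` then give
`A_{k+1} φ(y_{k+1}) + V_{z_{k+1}}(u) ≤ A_k φ(y_k) + α_{k+1} ℓ_{k+1}(u) + V_{z_k}(u)`,
where `ℓ_{k+1}` is the linearization of `f` at `x_{k+1}` plus `Ψ`. The recursion for `α` is
exactly `A_{k+1} - α_{k+1} = A_k`, which makes the weights match. Summing telescopes, and
`V ≥ 0` by strong convexity of `ω`.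
-/

open RealInnerProductSpace Set

section FirstOrder

variable {E : Type*} [NormedAddCommGroup E] [NormedSpace ℝ E]

theorem le_fderiv_of_forall_add_mul_le {F : E → ℝ} {F' : E →L[ℝ] ℝ} {p d : E} {c : ℝ}
    (hF : HasFDerivAt F F' p) (h : ∀ t ∈ Ioc (0 : ℝ) 1, F p + t * c ≤ F (p + t • d)) :
    c ≤ F' d := by
  have hline : HasDerivAt (fun t : ℝ => F (p + t • d)) (F' d) 0 := by
    have hseg : HasDerivAt (fun t : ℝ => p + t • d) d 0 := by
      simpa using ((hasDerivAt_id (0 : ℝ)).smul_const d).const_add p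
    exact (by simpa using hF : HasFDerivAt F F' (p + (0 : ℝ) • d)).comp_hasDerivAt 0 hseg
  refine ge_of_tendsto ((hasDerivAt_iff_tendsto_slope.mp hline).mono_left
    (nhdsGT_le_nhdsNE 0)) ?_
  filter_upwards [Ioc_mem_nhdsGT zero_lt_one] with t ht
  rw [slope_def_field, zero_smul, add_zero, sub_zero, le_div_iff₀ ht.1]
  linarith [h t ht]

theorem ConvexOn.add_fderiv_sub_le {s : Set E} {f : E → ℝ} {f' : E →L[ℝ] ℝ} {p q : E}
    (hf : ConvexOn ℝ s f) (hp : p ∈ s) (hq : q ∈ s) (hf' : HasFDerivAt f f' p) :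
    f p + f' (q - p) ≤ f q := by
  have := le_fderiv_of_forall_add_mul_le hf'.neg (d := q - p) (c := f p - f q) fun t ht => by
    have hft := hf.2 hp hq (sub_nonneg.2 ht.2) ht.1.le (sub_add_cancel 1 t)
    rw [smul_eq_mul, smul_eq_mul, show (1 - t) • p + t • q = p + t • (q - p) by module] at hft
    simp only [Pi.neg_apply]
    linarith
  simp only [neg_apply] at this
  linarith

theorem IsMinOn.sub_le_fderiv_of_convexOn {s : Set E} {F G : E → ℝ} {F' : E →L[ℝ] ℝ}
    {p q : E} (hmin : IsMinOn (fun v => F v + G v) s p) (hG : ConvexOn ℝ s G) (hp : p ∈ s)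
    (hq : q ∈ s) (hF : HasFDerivAt F F' p) : G p - G q ≤ F' (q - p) :=
  le_fderiv_of_forall_add_mul_le hF fun t ht => by
    have hseg : (1 - t) • p + t • q = p + t • (q - p) := by module
    have hmem := hG.1 hp hq (sub_nonneg.2 ht.2) ht.1.le (sub_add_cancel 1 t)
    have hGt := hG.2 hp hq (sub_nonneg.2 ht.2) ht.1.le (sub_add_cancel 1 t)
    rw [hseg] at hmem hGt
    rw [smul_eq_mul, smul_eq_mul] at hGt
    have := isMinOn_iff.mp hmin _ hmem
    linarith

end FirstOrder

theorem le_sum_Icc_of_succ_le {P W c : ℕ → ℝ}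
    (h : ∀ k, P (k + 1) + W (k + 1) ≤ P k + c (k + 1) + W k) (n : ℕ) :
    P n + W n ≤ P 0 + (∑ k ∈ Finset.Icc 1 n, c k) + W 0 := by
  induction n with
  | zero => simp
  | succ n ih =>
    rw [Finset.sum_Icc_succ_top (by omega)]
    linarith [h n]

noncomputable def posRoot (ℓ c : ℝ) : ℝ := √(c / ℓ + 1 / (4 * ℓ ^ 2)) + 1 / (2 * ℓ)

theorem posRoot_pos {ℓ : ℝ} (hℓ : 0 < ℓ) (c : ℝ) : 0 < posRoot ℓ c := by
  unfold posRoot; positivity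

theorem posRoot_spec {ℓ c : ℝ} (hℓ : 0 < ℓ) (hc : 0 ≤ c) :
    ℓ * posRoot ℓ c ^ 2 - posRoot ℓ c = c := by
  have hsq := Real.sq_sqrt (by positivity : 0 ≤ c / ℓ + 1 / (4 * ℓ ^ 2))
  unfold posRoot
  field_simp at hsq ⊢
  linear_combination hsq

section Bregman

variable {H : Type*} [NormedAddCommGroup H] [InnerProductSpace ℝ H]

def bregman (ω : H → ℝ) (ωgrad : H → H) (a b : H) : ℝ := ω b - ω a - ⟪ωgrad a, b - a⟫

variable {ω : H → ℝ} {ωgrad : H → H}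

theorem bregman_three_point (z z' u : H) :
    bregman ω ωgrad z u - bregman ω ωgrad z' u - bregman ω ωgrad z z' =
      ⟪ωgrad z' - ωgrad z, u - z'⟫ := by
  simp only [bregman, inner_sub_left, inner_sub_right]
  ring

variable [CompleteSpace H]

theorem hasFDerivAt_bregman {z z' : H} (hω : HasGradientAt ω (ωgrad z') z') :
    HasFDerivAt (bregman ω ωgrad z) (innerSL ℝ (ωgrad z') - innerSL ℝ (ωgrad z)) z' := by
  have hlin : HasFDerivAt (fun b => ⟪ωgrad z, b - z⟫) (innerSL ℝ (ωgrad z)) z' := by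
    simp_rw [inner_sub_right]
    exact (innerSL ℝ (ωgrad z)).hasFDerivAt.sub_const _
  exact ((hasGradientAt_iff_hasFDerivAt.mp hω).sub_const (ω z)).sub hlin

theorem mirror_step_le {Q : Set H} {Ψ : H → ℝ} {g z z' u : H} {a : ℝ} (ha : 0 < a)
    (hΨ : ConvexOn ℝ Q Ψ) (hω : HasGradientAt ω (ωgrad z') z') (hz' : z' ∈ Q) (hu : u ∈ Q)
    (hmin : IsMinOn (fun v => ⟪g, v - z⟫ + 1 / a * bregman ω ωgrad z v + Ψ v) Q z') :
    a * ⟪g, z' - u⟫ + a * Ψ z' - a * Ψ u ≤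
      bregman ω ωgrad z u - bregman ω ωgrad z' u - bregman ω ωgrad z z' := by
  have hF : HasFDerivAt (fun v => ⟪g, v - z⟫ + 1 / a * bregman ω ωgrad z v)
      (innerSL ℝ g + (1 / a) • (innerSL ℝ (ωgrad z') - innerSL ℝ (ωgrad z))) z' := by
    have hlin : HasFDerivAt (fun v => ⟪g, v - z⟫) (innerSL ℝ g) z' := by
      simp_rw [inner_sub_right]
      exact (innerSL ℝ g).hasFDerivAt.sub_const _
    exact hlin.add ((hasFDerivAt_bregman hω).const_mul (1 / a))
  have hvar := hmin.sub_le_fderiv_of_convexOn hΨ hz' hu hF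
  simp only [add_apply, smul_apply, sub_apply, innerSL_apply_apply, smul_eq_mul] at hvar
  rw [bregman_three_point, inner_sub_left, ← neg_sub u z', inner_neg_right]
  have := mul_le_mul_of_nonneg_left hvar ha.le
  field_simp at this
  linarith

end Bregman

section AcceleratedStep

variable {H : Type*} [NormedAddCommGroup H] [InnerProductSpace ℝ H]
  {Q : Set H} {f Ψ : H → ℝ} {g x' y y' z z' : H}

theorem gradient_step_le {τ L : ℝ} (hτ0 : 0 ≤ τ) (hτ1 : τ ≤ 1) (hΨ : ConvexOn ℝ Q Ψ)
    (hy : y ∈ Q) (hz' : z' ∈ Q) (hx' : x' = τ • z + (1 - τ) • y)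
    (hmin : IsMinOn (fun v => ⟪g, v - x'⟫ + (L / 2) * ‖v - x'‖ ^ 2 + Ψ v) Q y')
    (hdescent : f y' ≤ f x' + ⟪g, y' - x'⟫ + (L / 2) * ‖y' - x'‖ ^ 2) :
    f y' + Ψ y' ≤ f x' + τ * ⟪g, z' - z⟫ + L * τ ^ 2 / 2 * ‖z' - z‖ ^ 2
      + τ * Ψ z' + (1 - τ) * Ψ y := by
  have hv : τ • z' + (1 - τ) • y - x' = τ • (z' - z) := by rw [hx']; module
  have hvQ := hΨ.1 hz' hy hτ0 (sub_nonneg.2 hτ1) (add_sub_cancel τ 1)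
  have hΨv := hΨ.2 hz' hy hτ0 (sub_nonneg.2 hτ1) (add_sub_cancel τ 1)
  have hyv := isMinOn_iff.mp hmin _ hvQ
  rw [hv, real_inner_smul_right, norm_smul, mul_pow, Real.norm_eq_abs, sq_abs] at hyv
  rw [smul_eq_mul, smul_eq_mul] at hΨv
  linarith

variable [CompleteSpace H] {ω : H → ℝ} {ωgrad : H → H}

theorem accelerated_step_le {a L A τ : ℝ} {u : H} (ha : 0 < a) (hL : 0 < L) (hA0 : 0 ≤ A)
    (hA : L * a ^ 2 - a = A) (hτ : τ = 1 / (a * L)) (hx' : x' = τ • z + (1 - τ) • y)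
    (hy : y ∈ Q) (hz : z ∈ Q) (hz' : z' ∈ Q) (hu : u ∈ Q)
    (hf : ConvexOn ℝ Q f) (hg : HasGradientAt f g x') (hΨ : ConvexOn ℝ Q Ψ)
    (hω : HasGradientAt ω (ωgrad z') z') (hstrong : ‖z' - z‖ ^ 2 / 2 ≤ bregman ω ωgrad z z')
    (hymin : IsMinOn (fun v => ⟪g, v - x'⟫ + (L / 2) * ‖v - x'‖ ^ 2 + Ψ v) Q y')
    (hzmin : IsMinOn (fun v => ⟪g, v - z⟫ + 1 / a * bregman ω ωgrad z v + Ψ v) Q z')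
    (hdescent : f y' ≤ f x' + ⟪g, y' - x'⟫ + (L / 2) * ‖y' - x'‖ ^ 2) :
    a ^ 2 * L * (f y' + Ψ y') + bregman ω ωgrad z' u ≤
      A * (f y + Ψ y) + a * (f x' + ⟪g, u - x'⟫ + Ψ u) + bregman ω ωgrad z u := by
  have haL : 1 ≤ a * L := by nlinarith
  have hτ0 : 0 ≤ τ := by rw [hτ]; positivity
  have hτ1 : τ ≤ 1 := by rw [hτ, div_le_one (by positivity)]; exact haL
  have hx'Q : x' ∈ Q := hx' ▸ hf.1 hz hy hτ0 (sub_nonneg.2 hτ1) (add_sub_cancel τ 1)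
  have hgrad := gradient_step_le hτ0 hτ1 hΨ hy hz' hx' hymin hdescent
  have hmirror := mirror_step_le ha hΨ hω hz' hu hzmin
  have hconv := hf.add_fderiv_sub_le hx'Q hy (hasGradientAt_iff_hasFDerivAt.mp hg)
  rw [InnerProductSpace.toDual_apply_apply] at hconv
  -- the coupling `(a ^ 2 * L) • x' = A • y + a • z`, tested against `g`
  have hcoupling : a * ⟪g, u - x'⟫ = a * ⟪g, u - z⟫ - A * ⟪g, y - x'⟫ := by
    have hcoef : a * (1 - τ) = A * τ := by rw [← hA, hτ]; field_simp
    rw [show u - x' = (u - z) - (1 - τ) • (y - z) by rw [hx']; module,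
      show y - x' = τ • (y - z) by rw [hx']; module,
      inner_sub_right, real_inner_smul_right, real_inner_smul_right]
    linear_combination -⟪g, y - z⟫ * hcoef
  have hgradA : a ^ 2 * L * (f y' + Ψ y') ≤ (A + a) * f x' + a * ⟪g, z' - z⟫
      + ‖z' - z‖ ^ 2 / 2 + a * Ψ z' + A * Ψ y := by
    have e1 : a ^ 2 * L * τ = a := by rw [hτ]; field_simp
    have e2 : a ^ 2 * L * (L * τ ^ 2 / 2) = 1 / 2 := by rw [hτ]; field_simp
    have e3 : a ^ 2 * L * (1 - τ) = A := by rw [← hA, hτ]; field_simp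
    calc a ^ 2 * L * (f y' + Ψ y') ≤ a ^ 2 * L * (f x' + τ * ⟪g, z' - z⟫
          + L * τ ^ 2 / 2 * ‖z' - z‖ ^ 2 + τ * Ψ z' + (1 - τ) * Ψ y) :=
          mul_le_mul_of_nonneg_left hgrad (by positivity)
      _ = _ := by
        linear_combination (⟪g, z' - z⟫ + Ψ z' + f x') * e1 + ‖z' - z‖ ^ 2 * e2
          + (Ψ y + f x') * e3
  have hsplit : ⟪g, z' - z⟫ = ⟪g, z' - u⟫ + ⟪g, u - z⟫ := by
    rw [← inner_add_right, sub_add_sub_cancel]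
  rw [hsplit] at hgradA
  linarith [mul_le_mul_of_nonneg_left hconv hA0]

end AcceleratedStep

theorem stmt7_general
    {H : Type*} [NormedAddCommGroup H] [InnerProductSpace ℝ H] [CompleteSpace H]
    (Q : Set H)
    (f Ψ ω : H → ℝ) (fgrad ωgrad : H → H)
    (hf : ∀ x, HasGradientAt f (fgrad x) x)
    (hω : ∀ x, HasGradientAt ω (ωgrad x) x)
    (hfconv : ConvexOn ℝ Q f) (hΨconv : ConvexOn ℝ Q Ψ)
    (hωstrong : ∀ a ∈ Q, ∀ b ∈ Q,
      ω a + ⟪ωgrad a, b - a⟫ + (1 / 2) * ‖b - a‖ ^ 2 ≤ ω b)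
    (V : H → H → ℝ)
    (hV : ∀ a b, V a b = ω b - ω a - ⟪ωgrad a, b - a⟫)
    (φ : H → ℝ) (hφ : ∀ v, φ v = f v + Ψ v)
    (L : ℕ → ℝ) (hL : ∀ k, 0 < L k)
    (α : ℕ → ℝ) (hα0 : α 0 = 0)
    (hαrec : ∀ k, α (k + 1) =
      Real.sqrt ((α k) ^ 2 * L k / L (k + 1) + 1 / (4 * (L (k + 1)) ^ 2))
        + 1 / (2 * L (k + 1)))
    (τ : ℕ → ℝ) (hτ : ∀ k, τ k = 1 / (α (k + 1) * L (k + 1)))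
    (A : ℕ → ℝ) (hA : ∀ k, A k = (α k) ^ 2 * L k)
    (x y z : ℕ → H)
    (hx0 : x 0 ∈ Q) (hy0 : y 0 = x 0) (hz0 : z 0 = x 0)
    (hxrec : ∀ k, x (k + 1) = τ k • z k + (1 - τ k) • y k)
    (hyQ : ∀ k, y (k + 1) ∈ Q)
    (hymin : ∀ k, ∀ v ∈ Q,
      ⟪fgrad (x (k + 1)), y (k + 1) - x (k + 1)⟫
          + (L (k + 1) / 2) * ‖y (k + 1) - x (k + 1)‖ ^ 2 + Ψ (y (k + 1)) ≤
        ⟪fgrad (x (k + 1)), v - x (k + 1)⟫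
          + (L (k + 1) / 2) * ‖v - x (k + 1)‖ ^ 2 + Ψ v)
    (hzQ : ∀ k, z (k + 1) ∈ Q)
    (hzmin : ∀ k, ∀ v ∈ Q,
      ⟪fgrad (x (k + 1)), z (k + 1) - z k⟫
          + (1 / α (k + 1)) * V (z k) (z (k + 1)) + Ψ (z (k + 1)) ≤
        ⟪fgrad (x (k + 1)), v - z k⟫ + (1 / α (k + 1)) * V (z k) v + Ψ v)
    (hdescent : ∀ k, f (y (k + 1)) ≤
      f (x (k + 1)) + ⟪fgrad (x (k + 1)), y (k + 1) - x (k + 1)⟫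
        + (L (k + 1) / 2) * ‖y (k + 1) - x (k + 1)‖ ^ 2)
    (T : ℕ) (u : H) (hu : u ∈ Q) :
    A T * φ (y T) ≤
      (∑ k ∈ Finset.Icc 1 T,
        α k * (f (x k) + ⟪fgrad (x k), u - x k⟫ + Ψ u)) + V (z 0) u := by
  obtain rfl : V = bregman ω ωgrad := funext fun a => funext (hV a)
  have hstrong (a : H) (ha : a ∈ Q) (b : H) (hb : b ∈ Q) :
      ‖b - a‖ ^ 2 / 2 ≤ bregman ω ωgrad a b := by
    unfold bregman; linarith [hωstrong a ha b hb]
  have hyQ' : ∀ k, y k ∈ Q := fun | 0 => hy0 ▸ hx0 | k + 1 => hyQ k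
  have hzQ' : ∀ k, z k ∈ Q := fun | 0 => hz0 ▸ hx0 | k + 1 => hzQ k
  have hA0 (k : ℕ) : 0 ≤ A k := hA k ▸ mul_nonneg (sq_nonneg _) (hL k).le
  have hα (k : ℕ) : α (k + 1) = posRoot (L (k + 1)) (A k) := by rw [hαrec, hA]; rfl
  have hstep (k : ℕ) : A (k + 1) * φ (y (k + 1)) + bregman ω ωgrad (z (k + 1)) u ≤
      A k * φ (y k) + α (k + 1) * (f (x (k + 1)) + ⟪fgrad (x (k + 1)), u - x (k + 1)⟫ + Ψ u)
        + bregman ω ωgrad (z k) u := by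
    rw [hφ, hφ, hA (k + 1)]
    refine accelerated_step_le (hα k ▸ posRoot_pos (hL _) _) (hL _) (hA0 k)
      (hα k ▸ posRoot_spec (hL _) (hA0 k)) (hτ k) (hxrec k) (hyQ' k) (hzQ' k) (hzQ k) hu
      hfconv (hf _) hΨconv (hω _) (hstrong _ (hzQ' k) _ (hzQ k)) (isMinOn_iff.2 (hymin k))
      (isMinOn_iff.2 (hzmin k)) (hdescent k)
  have htel := le_sum_Icc_of_succ_le (P := fun k => A k * φ (y k))
    (W := fun k => bregman ω ωgrad (z k) u)
    (c := fun k => α k * (f (x k) + ⟪fgrad (x k), u - x k⟫ + Ψ u)) hstep T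
  have hW : 0 ≤ bregman ω ωgrad (z T) u := (by positivity : (0 : ℝ) ≤ _).trans (hstrong _ (hzQ' T) u hu)
  simp only [hA 0, hα0] at htel
  linarith

/-- Primal-dual inequality for the adaptive accelerated composite gradient method:
for every `T ≥ 1` and every `u ∈ Q`,
`A_T·φ(y_T) ≤ ∑_{k=1}^{T} α_k·( f(x_k) + ⟨∇f(x_k), u − x_k⟩ + Ψ(u) ) + V_{z_0}(u)`,
where `A_T = α_T² L_T`; in particular `A_T·φ(y_T)` is bounded by the minimum over
`u ∈ Q` of the right-hand side. -/
theorem stmt7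
    {H : Type*} [NormedAddCommGroup H] [InnerProductSpace ℝ H] [CompleteSpace H]
    (Q : Set H) (hQne : Q.Nonempty) (hQclosed : IsClosed Q) (hQconv : Convex ℝ Q)
    (f Ψ ω : H → ℝ) (fgrad ωgrad : H → H)
    (hf : ∀ x, HasGradientAt f (fgrad x) x)
    (hω : ∀ x, HasGradientAt ω (ωgrad x) x)
    (hfconv : ConvexOn ℝ Q f) (hΨconv : ConvexOn ℝ Q Ψ)
    (hωstrong : ∀ a ∈ Q, ∀ b ∈ Q,
      ω a + ⟪ωgrad a, b - a⟫ + (1 / 2) * ‖b - a‖ ^ 2 ≤ ω b)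
    (V : H → H → ℝ)
    (hV : ∀ a b, V a b = ω b - ω a - ⟪ωgrad a, b - a⟫)
    (φ : H → ℝ) (hφ : ∀ v, φ v = f v + Ψ v)
    (L : ℕ → ℝ) (hL : ∀ k, 0 < L k)
    (α : ℕ → ℝ) (hα0 : α 0 = 0)
    (hαrec : ∀ k, α (k + 1) =
      Real.sqrt ((α k) ^ 2 * L k / L (k + 1) + 1 / (4 * (L (k + 1)) ^ 2))
        + 1 / (2 * L (k + 1)))
    (τ : ℕ → ℝ) (hτ : ∀ k, τ k = 1 / (α (k + 1) * L (k + 1)))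
    (A : ℕ → ℝ) (hA : ∀ k, A k = (α k) ^ 2 * L k)
    (x y z : ℕ → H)
    (hx0 : x 0 ∈ Q) (hy0 : y 0 = x 0) (hz0 : z 0 = x 0)
    (hxrec : ∀ k, x (k + 1) = τ k • z k + (1 - τ k) • y k)
    (hyQ : ∀ k, y (k + 1) ∈ Q)
    (hymin : ∀ k, ∀ v ∈ Q,
      ⟪fgrad (x (k + 1)), y (k + 1) - x (k + 1)⟫
          + (L (k + 1) / 2) * ‖y (k + 1) - x (k + 1)‖ ^ 2 + Ψ (y (k + 1)) ≤
        ⟪fgrad (x (k + 1)), v - x (k + 1)⟫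
          + (L (k + 1) / 2) * ‖v - x (k + 1)‖ ^ 2 + Ψ v)
    (hzQ : ∀ k, z (k + 1) ∈ Q)
    (hzmin : ∀ k, ∀ v ∈ Q,
      ⟪fgrad (x (k + 1)), z (k + 1) - z k⟫
          + (1 / α (k + 1)) * V (z k) (z (k + 1)) + Ψ (z (k + 1)) ≤
        ⟪fgrad (x (k + 1)), v - z k⟫ + (1 / α (k + 1)) * V (z k) v + Ψ v)
    (hdescent : ∀ k, f (y (k + 1)) ≤
      f (x (k + 1)) + ⟪fgrad (x (k + 1)), y (k + 1) - x (k + 1)⟫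
        + (L (k + 1) / 2) * ‖y (k + 1) - x (k + 1)‖ ^ 2)
    (T : ℕ) (hT : 1 ≤ T) (u : H) (hu : u ∈ Q) :
    A T * φ (y T) ≤
      (∑ k ∈ Finset.Icc 1 T,
        α k * (f (x k) + ⟪fgrad (x k), u - x k⟫ + Ψ u)) + V (z 0) u :=
  stmt7_general Q f Ψ ω fgrad ωgrad hf hω hfconv hΨconv hωstrong V hV φ hφ L hL α hα0 hαrec τ hτ A
    hA x y z hx0 hy0 hz0 hxrec hyQ hymin hzQ hzmin hdescent T u hu
end

section
/- For the iterates of the adaptive accelerated gradient method described in the context, for every T ≥ 1 and every u ∈ Q: φ(y_T) ≤ φ(u) + V_{z_0}(u)/A_T, where A_T = α_T² L_T. -/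
/-!
The potential `A_k (φ(y_k) - φ(u)) + V_{z_k}(u)` is nonincreasing; since `A_0 = 0` and `V ≥ 0`
this gives the bound. In one step, the gradient step `y_{k+1}` is compared with the point
`τ_k z_{k+1} + (1 - τ_k) y_k`: strong convexity of `ω` dominates its quadratic term by the
Bregman term of the mirror step, the three-point property of the mirror step trades that for
`V_{z_k}(u) - V_{z_{k+1}}(u)`, and convexity of `f` at `x_{k+1}` does the rest. The step sizes
solve `α_{k+1}² L_{k+1} = A_k + α_{k+1}`, so `A_{k+1} τ_k = α_{k+1}` and the step inequality,
multiplied by `A_{k+1}`, telescopes.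
-/

open RealInnerProductSpace Filter Topology

theorem ConvexOn.le_add_of_isMinOn_add {E : Type*} [AddCommGroup E] [Module ℝ E]
    {Q : Set E} {h F : E → ℝ} (hh : ConvexOn ℝ Q h) {z u : E} (hz : z ∈ Q) (hu : u ∈ Q)
    {D : ℝ} (hF : HasLineDerivAt ℝ F D z (u - z)) (hmin : IsMinOn (h + F) Q z) :
    h z ≤ h u + D := by
  have hslope : ∀ᶠ t in 𝓝[>] (0 : ℝ), h z - h u ≤ t⁻¹ • (F (z + t • (u - z)) - F z) := by
    filter_upwards [Ioc_mem_nhdsGT_of_mem (Set.left_mem_Ico.2 one_pos)] with t ⟨ht0, ht1⟩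
    have hseg : (1 - t) • z + t • u = z + t • (u - z) := by module
    have hconv := hh.2 hz hu (sub_nonneg.2 ht1) ht0.le (sub_add_cancel 1 t)
    have hle := isMinOn_iff.1 hmin _ (hseg ▸ hh.1 hz hu (sub_nonneg.2 ht1) ht0.le (by ring))
    rw [hseg, smul_eq_mul, smul_eq_mul] at hconv
    rw [smul_eq_mul, le_inv_mul_iff₀ ht0]
    simp only [Pi.add_apply] at hle
    nlinarith
  linarith [ge_of_tendsto hF.tendsto_slope_zero_right hslope]

theorem ConvexOn.add_inner_le_of_hasGradientAt {H : Type*} [NormedAddCommGroup H]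
    [InnerProductSpace ℝ H] [CompleteSpace H] {Q : Set H} {f : H → ℝ} {g x w : H}
    (hf : ConvexOn ℝ Q f) (hg : HasGradientAt f g x) (hx : x ∈ Q) (hw : w ∈ Q) :
    f x + ⟪g, w - x⟫ ≤ f w := by
  have hline : HasLineDerivAt ℝ (-f) (-⟪g, w - x⟫) x (w - x) :=
    (hg.hasFDerivAt.hasLineDerivAt (w - x)).neg
  -- `f + (-f)` vanishes, so `x` minimises it on `Q`.
  have := hf.le_add_of_isMinOn_add hx hw hline (isMinOn_iff.2 fun v _ => by simp)
  linarith

section Bregman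

variable {H : Type*} [NormedAddCommGroup H] [InnerProductSpace ℝ H]
  {ω : H → ℝ} {ωgrad : H → H} {V : H → H → ℝ}

theorem bregman_three_point_s8 (hV : ∀ a b, V a b = ω b - ω a - ⟪ωgrad a, b - a⟫) (a b c : H) :
    V a c = V a b + V b c + ⟪ωgrad b - ωgrad a, c - b⟫ := by
  simp only [hV, inner_sub_left, inner_sub_right]
  ring

theorem hasLineDerivAt_bregman [CompleteSpace H]
    (hV : ∀ a b, V a b = ω b - ω a - ⟪ωgrad a, b - a⟫) {a b : H}
    (hω : HasGradientAt ω (ωgrad b) b) (d : H) :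
    HasLineDerivAt ℝ (V a) ⟪ωgrad b - ωgrad a, d⟫ b d := by
  have hω_line : HasDerivAt (fun t : ℝ => ω (b + t • d)) ⟪ωgrad b, d⟫ 0 :=
    hω.hasFDerivAt.hasLineDerivAt d
  have haff : HasDerivAt (fun t : ℝ => ⟪ωgrad a, b - a⟫ + t * ⟪ωgrad a, d⟫) ⟪ωgrad a, d⟫ 0 := by
    simpa using ((hasDerivAt_id (0 : ℝ)).mul_const ⟪ωgrad a, d⟫).const_add ⟪ωgrad a, b - a⟫
  unfold HasLineDerivAt
  convert (hω_line.sub_const (ω a)).sub haff using 1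
  · funext t
    rw [hV, show b + t • d - a = (b - a) + t • d by abel, inner_add_right, real_inner_smul_right]
    rfl
  · rw [inner_sub_left]

theorem ConvexOn.add_bregman_le_of_isMinOn [CompleteSpace H]
    (hV : ∀ a b, V a b = ω b - ω a - ⟪ωgrad a, b - a⟫) {Q : Set H} {h : H → ℝ}
    (hh : ConvexOn ℝ Q h) {c : ℝ} {z z' u : H} (hω : HasGradientAt ω (ωgrad z') z')
    (hz' : z' ∈ Q) (hu : u ∈ Q) (hmin : IsMinOn (fun v => h v + c * V z v) Q z') :
    h z' + c * V z z' + c * V z' u ≤ h u + c * V z u := by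
  have hline : HasLineDerivAt ℝ (fun v => c * V z v) (c * ⟪ωgrad z' - ωgrad z, u - z'⟫) z'
      (u - z') :=
    (hasLineDerivAt_bregman hV hω (u - z')).const_mul c
  have := hh.le_add_of_isMinOn_add hz' hu hline hmin
  linear_combination this - c * bregman_three_point_s8 hV z z' u

theorem gradient_step_le_mirror_step {Q : Set H}
    (hVsq : ∀ a ∈ Q, ∀ b ∈ Q, 1 / 2 * ‖b - a‖ ^ 2 ≤ V a b) {Ψ : H → ℝ}
    (hΨconv : ConvexOn ℝ Q Ψ) {x y z y' z' g : H} {τ α L : ℝ}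
    (hτ0 : 0 ≤ τ) (hτ1 : τ ≤ 1) (hα : 0 < α) (hτL : τ * L = 1 / α)
    (hx : x = τ • z + (1 - τ) • y) (hy : y ∈ Q) (hz : z ∈ Q) (hz' : z' ∈ Q)
    (hymin : ∀ v ∈ Q, ⟪g, y' - x⟫ + L / 2 * ‖y' - x‖ ^ 2 + Ψ y' ≤
      ⟪g, v - x⟫ + L / 2 * ‖v - x‖ ^ 2 + Ψ v) :
    ⟪g, y' - x⟫ + L / 2 * ‖y' - x‖ ^ 2 + Ψ y' ≤
      τ * (⟪g, z' - z⟫ + 1 / α * V z z' + Ψ z') + (1 - τ) * Ψ y := by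
  set v := τ • z' + (1 - τ) • y
  have hvx : v - x = τ • (z' - z) := by rw [hx]; module
  have hΨv : Ψ v ≤ τ * Ψ z' + (1 - τ) * Ψ y :=
    hΨconv.2 hz' hy hτ0 (sub_nonneg.2 hτ1) (by ring)
  have hsq : L / 2 * ‖v - x‖ ^ 2 ≤ τ * (1 / α * V z z') := by
    rw [hvx, norm_smul, mul_pow, Real.norm_eq_abs, sq_abs]
    calc L / 2 * (τ ^ 2 * ‖z' - z‖ ^ 2) = τ * (τ * L) * (1 / 2 * ‖z' - z‖ ^ 2) := by ring
      _ ≤ τ * (1 / α * V z z') := by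
        rw [hτL, mul_assoc]
        exact mul_le_mul_of_nonneg_left
          (mul_le_mul_of_nonneg_left (hVsq z hz z' hz') (one_div_pos.2 hα).le) hτ0
  have hmin := hymin v (hΨconv.1 hz' hy hτ0 (sub_nonneg.2 hτ1) (by ring))
  rw [hvx, real_inner_smul_right, ← hvx] at hmin
  linarith

theorem accelerated_step [CompleteSpace H]
    (hV : ∀ a b, V a b = ω b - ω a - ⟪ωgrad a, b - a⟫) {Q : Set H}
    (hVsq : ∀ a ∈ Q, ∀ b ∈ Q, 1 / 2 * ‖b - a‖ ^ 2 ≤ V a b)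
    {f Ψ : H → ℝ} (hfconv : ConvexOn ℝ Q f) (hΨconv : ConvexOn ℝ Q Ψ)
    {x y z y' z' u g : H} {τ α L : ℝ}
    (hf : HasGradientAt f g x) (hω : HasGradientAt ω (ωgrad z') z')
    (hτ0 : 0 ≤ τ) (hτ1 : τ ≤ 1) (hα : 0 < α) (hτL : τ * L = 1 / α)
    (hx : x = τ • z + (1 - τ) • y) (hy : y ∈ Q) (hz : z ∈ Q) (hz' : z' ∈ Q) (hu : u ∈ Q)
    (hymin : ∀ v ∈ Q, ⟪g, y' - x⟫ + L / 2 * ‖y' - x‖ ^ 2 + Ψ y' ≤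
      ⟪g, v - x⟫ + L / 2 * ‖v - x‖ ^ 2 + Ψ v)
    (hzmin : ∀ v ∈ Q, ⟪g, z' - z⟫ + 1 / α * V z z' + Ψ z' ≤
      ⟪g, v - z⟫ + 1 / α * V z v + Ψ v)
    (hdescent : f y' ≤ f x + ⟪g, y' - x⟫ + L / 2 * ‖y' - x‖ ^ 2) :
    (f + Ψ) y' ≤ (1 - τ) * (f + Ψ) y + τ * (f + Ψ) u + τ / α * (V z u - V z' u) := by
  have hxQ : x ∈ Q := hx ▸ hfconv.1 hz hy hτ0 (sub_nonneg.2 hτ1) (by ring)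
  have hprox := gradient_step_le_mirror_step hVsq hΨconv hτ0 hτ1 hα hτL hx hy hz hz' hymin
  have hlin : ConvexOn ℝ Q fun v => ⟪g, v - z⟫ + Ψ v := by
    refine ((((innerₗ H g).convexOn hfconv.1).add hΨconv).add_const (-⟪g, z⟫)).congr
      fun v _ => ?_
    simp only [Pi.add_apply, innerₗ_apply_apply, inner_sub_right]
    ring
  have hmirror := hlin.add_bregman_le_of_isMinOn (c := 1 / α) (z := z) hV hω hz' hu
    (isMinOn_iff.2 fun v hv => by linarith [hzmin v hv])
  have hcoupling : τ * ⟪g, u - z⟫ = τ * ⟪g, u - x⟫ + (1 - τ) * ⟪g, y - x⟫ := by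
    rw [← real_inner_smul_right, ← real_inner_smul_right, ← real_inner_smul_right,
      ← inner_add_right, hx]
    congr 1
    module
  have hfu := hfconv.add_inner_le_of_hasGradientAt hf hxQ hu
  have hfy := hfconv.add_inner_le_of_hasGradientAt hf hxQ hy
  calc (f + Ψ) y' ≤ f x + (⟪g, y' - x⟫ + L / 2 * ‖y' - x‖ ^ 2 + Ψ y') := by
        rw [Pi.add_apply]; linarith
    _ ≤ f x + τ * (⟪g, z' - z⟫ + 1 / α * V z z' + Ψ z') + (1 - τ) * Ψ y := by linarith
    _ ≤ f x + τ * (⟪g, u - z⟫ + 1 / α * V z u + Ψ u - 1 / α * V z' u) + (1 - τ) * Ψ y := by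
        gcongr; linarith
    _ = (1 - τ) * (f x + ⟪g, y - x⟫) + τ * (f x + ⟪g, u - x⟫) + (1 - τ) * Ψ y + τ * Ψ u
          + τ / α * (V z u - V z' u) := by
        linear_combination hcoupling
    _ ≤ (1 - τ) * (f + Ψ) y + τ * (f + Ψ) u + τ / α * (V z u - V z' u) := by
        simp only [Pi.add_apply]
        linear_combination τ * hfu + (1 - τ) * hfy

end Bregman

theorem pos_and_sq_mul_eq_add_of_eq_sqrt {A L a : ℝ} (hA : 0 ≤ A) (hL : 0 < L)
    (ha : a = √(A / L + 1 / (4 * L ^ 2)) + 1 / (2 * L)) : 0 < a ∧ a ^ 2 * L = A + a := by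
  have hsq : √(A / L + 1 / (4 * L ^ 2)) ^ 2 = A / L + 1 / (4 * L ^ 2) :=
    Real.sq_sqrt (by positivity)
  refine ⟨ha ▸ by positivity, ?_⟩
  rw [ha]
  field_simp at hsq ⊢
  linear_combination hsq

theorem potential_step_le {P P' c D D' τ a A A' : ℝ}
    (h : P' ≤ (1 - τ) * P + τ * c + τ / a * (D - D')) (hA' : 0 ≤ A') (ha : a ≠ 0)
    (hτ : A' * τ = a) (hA : A' = A + a) :
    A' * (P' - c) + D' ≤ A * (P - c) + D := by
  have hτa : A' * τ / a = 1 := by rw [hτ, div_self ha]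
  linear_combination A' * h + (c - P) * hτ + (D - D') * hτa + (P - c) * hA

theorem le_add_div_of_potential_le {A Φ D : ℕ → ℝ} {c : ℝ} (hA0 : A 0 = 0)
    (hdec : ∀ k, A (k + 1) * (Φ (k + 1) - c) + D (k + 1) ≤ A k * (Φ k - c) + D k)
    {T : ℕ} (hD : 0 ≤ D T) (hAT : 0 < A T) : Φ T ≤ c + D 0 / A T := by
  have := antitone_nat_of_succ_le (f := fun k => A k * (Φ k - c) + D k) hdec (Nat.zero_le T)
  simp only [hA0, zero_mul, zero_add] at this
  rw [← sub_le_iff_le_add', le_div_iff₀ hAT]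
  linarith

theorem stmt8_general
    {H : Type*} [NormedAddCommGroup H] [InnerProductSpace ℝ H] [CompleteSpace H]
    (Q : Set H)
    (f Ψ ω : H → ℝ) (fgrad ωgrad : H → H)
    (hf : ∀ x, HasGradientAt f (fgrad x) x)
    (hω : ∀ x, HasGradientAt ω (ωgrad x) x)
    (hfconv : ConvexOn ℝ Q f) (hΨconv : ConvexOn ℝ Q Ψ)
    (hωstrong : ∀ a ∈ Q, ∀ b ∈ Q,
      ω a + ⟪ωgrad a, b - a⟫ + (1 / 2) * ‖b - a‖ ^ 2 ≤ ω b)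
    (V : H → H → ℝ)
    (hV : ∀ a b, V a b = ω b - ω a - ⟪ωgrad a, b - a⟫)
    (φ : H → ℝ) (hφ : ∀ v, φ v = f v + Ψ v)
    (L : ℕ → ℝ) (hL : ∀ k, 0 < L k)
    (α : ℕ → ℝ) (hα0 : α 0 = 0)
    (hαrec : ∀ k, α (k + 1) =
      Real.sqrt ((α k) ^ 2 * L k / L (k + 1) + 1 / (4 * (L (k + 1)) ^ 2))
        + 1 / (2 * L (k + 1)))
    (τ : ℕ → ℝ) (hτ : ∀ k, τ k = 1 / (α (k + 1) * L (k + 1)))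
    (A : ℕ → ℝ) (hA : ∀ k, A k = (α k) ^ 2 * L k)
    (x y z : ℕ → H)
    (hx0 : x 0 ∈ Q) (hy0 : y 0 = x 0) (hz0 : z 0 = x 0)
    (hxrec : ∀ k, x (k + 1) = τ k • z k + (1 - τ k) • y k)
    (hyQ : ∀ k, y (k + 1) ∈ Q)
    (hymin : ∀ k, ∀ v ∈ Q,
      ⟪fgrad (x (k + 1)), y (k + 1) - x (k + 1)⟫
          + (L (k + 1) / 2) * ‖y (k + 1) - x (k + 1)‖ ^ 2 + Ψ (y (k + 1)) ≤
        ⟪fgrad (x (k + 1)), v - x (k + 1)⟫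
          + (L (k + 1) / 2) * ‖v - x (k + 1)‖ ^ 2 + Ψ v)
    (hzQ : ∀ k, z (k + 1) ∈ Q)
    (hzmin : ∀ k, ∀ v ∈ Q,
      ⟪fgrad (x (k + 1)), z (k + 1) - z k⟫
          + (1 / α (k + 1)) * V (z k) (z (k + 1)) + Ψ (z (k + 1)) ≤
        ⟪fgrad (x (k + 1)), v - z k⟫ + (1 / α (k + 1)) * V (z k) v + Ψ v)
    (hdescent : ∀ k, f (y (k + 1)) ≤
      f (x (k + 1)) + ⟪fgrad (x (k + 1)), y (k + 1) - x (k + 1)⟫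
        + (L (k + 1) / 2) * ‖y (k + 1) - x (k + 1)‖ ^ 2)
    (T : ℕ) (hT : 1 ≤ T) (u : H) (hu : u ∈ Q) :
    φ (y T) ≤ φ u + V (z 0) u / A T := by
  obtain rfl : φ = f + Ψ := funext hφ
  have hVsq : ∀ a ∈ Q, ∀ b ∈ Q, 1 / 2 * ‖b - a‖ ^ 2 ≤ V a b := fun a ha b hb => by
    rw [hV]; linarith [hωstrong a ha b hb]
  have hyQ' : ∀ k, y k ∈ Q := by rintro (_ | k); exacts [hy0 ▸ hx0, hyQ k]
  have hzQ' : ∀ k, z k ∈ Q := by rintro (_ | k); exacts [hz0 ▸ hx0, hzQ k]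
  have hA_nonneg : ∀ k, 0 ≤ A k := fun k => hA k ▸ by have := hL k; positivity
  have hα : ∀ k, 0 < α (k + 1) ∧ α (k + 1) ^ 2 * L (k + 1) = A k + α (k + 1) := fun k =>
    pos_and_sq_mul_eq_add_of_eq_sqrt (hA_nonneg k) (hL (k + 1)) (by rw [hαrec, hA])
  obtain ⟨T, rfl⟩ := Nat.exists_eq_add_of_le' hT
  refine le_add_div_of_potential_le (Φ := fun k => (f + Ψ) (y k)) (D := fun k => V (z k) u)
    (by rw [hA, hα0]; ring) (fun k => ?_) ((hVsq _ (hzQ' _) u hu).trans' (by positivity))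
    (hA (T + 1) ▸ mul_pos (pow_pos (hα T).1 2) (hL _))
  obtain ⟨hαk, hAk⟩ := hα k
  have hLk := hL (k + 1)
  have hτL : τ k * L (k + 1) = 1 / α (k + 1) := by rw [hτ]; field_simp
  have hτ1 : τ k ≤ 1 := by
    rw [hτ, div_le_one (by positivity)]; nlinarith [hA_nonneg k]
  have hstep := accelerated_step hV hVsq hfconv hΨconv (hf _) (hω _) (hτ k ▸ by positivity) hτ1
    hαk hτL (hxrec k) (hyQ' k) (hzQ' k) (hzQ k) hu (hymin k) (hzmin k) (hdescent k)
  exact potential_step_le hstep (hA_nonneg _) hαk.ne' (by rw [hA, hτ]; field_simp) (by rw [hA, hAk])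

/-- Convergence estimate for the adaptive accelerated composite gradient method:
for every `T ≥ 1` and every `u ∈ Q`, `φ(y_T) ≤ φ(u) + V_{z_0}(u) / A_T`,
where `A_T = α_T² L_T`. -/
theorem stmt8
    {H : Type*} [NormedAddCommGroup H] [InnerProductSpace ℝ H] [CompleteSpace H]
    (Q : Set H) (hQne : Q.Nonempty) (hQclosed : IsClosed Q) (hQconv : Convex ℝ Q)
    (f Ψ ω : H → ℝ) (fgrad ωgrad : H → H)
    (hf : ∀ x, HasGradientAt f (fgrad x) x)
    (hω : ∀ x, HasGradientAt ω (ωgrad x) x)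
    (hfconv : ConvexOn ℝ Q f) (hΨconv : ConvexOn ℝ Q Ψ)
    (hωstrong : ∀ a ∈ Q, ∀ b ∈ Q,
      ω a + ⟪ωgrad a, b - a⟫ + (1 / 2) * ‖b - a‖ ^ 2 ≤ ω b)
    (V : H → H → ℝ)
    (hV : ∀ a b, V a b = ω b - ω a - ⟪ωgrad a, b - a⟫)
    (φ : H → ℝ) (hφ : ∀ v, φ v = f v + Ψ v)
    (L : ℕ → ℝ) (hL : ∀ k, 0 < L k)
    (α : ℕ → ℝ) (hα0 : α 0 = 0)
    (hαrec : ∀ k, α (k + 1) =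
      Real.sqrt ((α k) ^ 2 * L k / L (k + 1) + 1 / (4 * (L (k + 1)) ^ 2))
        + 1 / (2 * L (k + 1)))
    (τ : ℕ → ℝ) (hτ : ∀ k, τ k = 1 / (α (k + 1) * L (k + 1)))
    (A : ℕ → ℝ) (hA : ∀ k, A k = (α k) ^ 2 * L k)
    (x y z : ℕ → H)
    (hx0 : x 0 ∈ Q) (hy0 : y 0 = x 0) (hz0 : z 0 = x 0)
    (hxrec : ∀ k, x (k + 1) = τ k • z k + (1 - τ k) • y k)
    (hyQ : ∀ k, y (k + 1) ∈ Q)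
    (hymin : ∀ k, ∀ v ∈ Q,
      ⟪fgrad (x (k + 1)), y (k + 1) - x (k + 1)⟫
          + (L (k + 1) / 2) * ‖y (k + 1) - x (k + 1)‖ ^ 2 + Ψ (y (k + 1)) ≤
        ⟪fgrad (x (k + 1)), v - x (k + 1)⟫
          + (L (k + 1) / 2) * ‖v - x (k + 1)‖ ^ 2 + Ψ v)
    (hzQ : ∀ k, z (k + 1) ∈ Q)
    (hzmin : ∀ k, ∀ v ∈ Q,
      ⟪fgrad (x (k + 1)), z (k + 1) - z k⟫
          + (1 / α (k + 1)) * V (z k) (z (k + 1)) + Ψ (z (k + 1)) ≤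
        ⟪fgrad (x (k + 1)), v - z k⟫ + (1 / α (k + 1)) * V (z k) v + Ψ v)
    (hdescent : ∀ k, f (y (k + 1)) ≤
      f (x (k + 1)) + ⟪fgrad (x (k + 1)), y (k + 1) - x (k + 1)⟫
        + (L (k + 1) / 2) * ‖y (k + 1) - x (k + 1)‖ ^ 2)
    (T : ℕ) (hT : 1 ≤ T) (u : H) (hu : u ∈ Q) :
    φ (y T) ≤ φ u + V (z 0) u / A T :=
  stmt8_general Q f Ψ ω fgrad ωgrad hf hω hfconv hΨconv hωstrong V hV φ hφ L hL α hα0 hαrec τ hτ A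
    hA x y z hx0 hy0 hz0 hxrec hyQ hymin hzQ hzmin hdescent T hT u hu
end
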